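/- arXiv:2106.00215 — 2 statements merged into one kernel-verified Lean document; each statement's English description precedes it below -/
import Mathlib

section
/- For every ε > 0, the system of equations ε = x² − y² and −εx = 4xy² has no real solution (x, y). Equivalently, the vector field f(x,y) = (x² − y², 4xy²) never equals the adversary vector field X_ε(x,y) = (ε, −εx) at any point. -/
/-- For every `ε > 0`, the system `ε = x² − y²`, `−εx = 4xy²` has no real solution:
the vector field `f(x,y) = (x² − y², 4xy²)` never equals the adversary
`X_ε(x,y) = (ε, −εx)`. -/
theorem no_solution_adversary :
    ∀ ε : ℝ, 0 < ε → ¬ ∃ x y : ℝ, ε = x ^ 2 - y ^ 2 ∧ -ε * x = 4 * x * y ^ 2 := by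
  rintro ε hε ⟨x, y, h₁, h₂⟩
  have hx : x = 0 := by
    by_contra hx
    have h : -ε = 4 * y ^ 2 := mul_right_cancel₀ hx (by linear_combination h₂)
    linarith [sq_nonneg y]
  subst hx
  linarith [sq_nonneg y]
end

section
/- Let M be a smooth manifold, F a continuous vector field on M generating a continuous (semi)flow Φ, and suppose S ⊆ M is precompact and strictly positively invariant: for all x₀ ∈ cl(S) and all t > 0, Φ^t(x₀) ∈ int(S). Then S is homotopy equivalent to its interior int(S); specifically, the time-1 map Φ¹|_S : S → int(S) is a homotopy inverse of the inclusion int(S) ↪ S. -/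
/-!
Running the flow backwards from time `1` to time `0`, `(s, x) ↦ Φ^{1-s}(x)`, deforms the time-one
map into the identity. Strict positive invariance keeps this deformation inside `S`, and inside
`int S` when it starts there; so, with `ι : int S → S` the inclusion, it is a homotopy
`ι ∘ Φ¹ ≃ id` on `S` and `Φ¹ ∘ ι ≃ id` on `int S`.
-/

open Set unitInterval

section

variable {M : Type*} [TopologicalSpace M] {Φ : ℝ → M → M}

theorem mapsTo_flow_of_strictlyInvariant (hΦ0 : ∀ x : M, Φ 0 x = x) {S : Set M}
    (hinv : ∀ x ∈ closure S, ∀ t : ℝ, 0 < t → Φ t x ∈ interior S) {A : Set M}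
    (hSA : interior S ⊆ A) (hAS : A ⊆ closure S) {t : ℝ} (ht : 0 ≤ t) :
    MapsTo (Φ t) A A := by
  intro x hx
  rcases ht.eq_or_lt with rfl | ht
  · rwa [hΦ0]
  · exact hSA (hinv x (hAS hx) t ht)

theorem homotopic_id_of_coe_eq_flow_one (hΦcont : Continuous fun p : ℝ × M => Φ p.1 p.2)
    (hΦ0 : ∀ x : M, Φ 0 x = x) {A : Set M} (hA : ∀ t : I, MapsTo (Φ t) A A) (f : C(A, A))
    (hf : ∀ x, (f x : M) = Φ 1 x) : f.Homotopic (ContinuousMap.id A) :=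
  ⟨{ toFun := fun p => ⟨Φ (σ p.1) p.2, hA (σ p.1) p.2.2⟩
     continuous_toFun :=
       (hΦcont.comp ((continuous_subtype_val.comp (continuous_symm.comp continuous_fst)).prodMk
         (continuous_subtype_val.comp continuous_snd))).subtype_mk _
     map_zero_left := fun x => Subtype.ext (by simp [hf])
     map_one_left := fun x => Subtype.ext (by simp [hΦ0]) }⟩

end

theorem strictly_invariant_homotopy_equiv_interior_general
    {M : Type*} [TopologicalSpace M]
    (Φ : ℝ → M → M)
    (hΦcont : Continuous fun p : ℝ × M => Φ p.1 p.2)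
    (hΦ0 : ∀ x : M, Φ 0 x = x)
    (S : Set M)
    (hinv : ∀ x ∈ closure S, ∀ t : ℝ, 0 < t → Φ t x ∈ interior S) :
    ∃ h : ContinuousMap.HomotopyEquiv S (interior S),
      (∀ x : S, ((h.toFun x : interior S) : M) = Φ 1 (x : M)) ∧
      (∀ y : interior S, ((h.invFun y : S) : M) = (y : M)) := by
  let f : C(S, interior S) :=
    ⟨fun x => ⟨Φ 1 x, hinv x (subset_closure x.2) 1 one_pos⟩,
      (hΦcont.comp (continuous_const.prodMk continuous_subtype_val)).subtype_mk _⟩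
  let g : C(interior S, S) := ⟨inclusion interior_subset, continuous_inclusion interior_subset⟩
  have hmaps {A : Set M} (hSA : interior S ⊆ A) (hAS : A ⊆ closure S) (t : I) :
      MapsTo (Φ t) A A :=
    mapsTo_flow_of_strictlyInvariant hΦ0 hinv hSA hAS t.2.1
  refine ⟨⟨f, g, ?_, ?_⟩, fun _ => rfl, fun _ => rfl⟩
  · exact homotopic_id_of_coe_eq_flow_one hΦcont hΦ0
      (hmaps interior_subset subset_closure) _ fun _ => rfl
  · exact homotopic_id_of_coe_eq_flow_one hΦcont hΦ0
      (hmaps subset_rfl (interior_subset.trans subset_closure)) _ fun _ => rfl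

/-- Let `Φ` be a continuous semiflow on a space `M` and let `S ⊆ M` be precompact
and strictly positively invariant: `Φ t x ∈ int S` for all `x ∈ cl S` and `t > 0`.
Then `S` is homotopy equivalent to `int S`; specifically the time-1 map `Φ¹|_S`
is a homotopy inverse of the inclusion `int S ↪ S`. -/
theorem strictly_invariant_homotopy_equiv_interior
    {M : Type*} [TopologicalSpace M]
    (Φ : ℝ → M → M)
    (hΦcont : Continuous fun p : ℝ × M => Φ p.1 p.2)
    (hΦ0 : ∀ x : M, Φ 0 x = x)
    (hΦadd : ∀ t s : ℝ, 0 ≤ t → 0 ≤ s → ∀ x : M, Φ (t + s) x = Φ t (Φ s x))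
    (S : Set M) (hS : IsCompact (closure S))
    (hinv : ∀ x ∈ closure S, ∀ t : ℝ, 0 < t → Φ t x ∈ interior S) :
    ∃ h : ContinuousMap.HomotopyEquiv S (interior S),
      (∀ x : S, ((h.toFun x : interior S) : M) = Φ 1 (x : M)) ∧
      (∀ y : interior S, ((h.invFun y : S) : M) = (y : M)) :=
  strictly_invariant_homotopy_equiv_interior_general Φ hΦcont hΦ0 S hinv
end
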